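/- Let $\mathcal{C}$ be an abelian category and $X$ an exact, locally nilpotent endofunctor. The monomorphism category $\operatorname{Mono}(X)$, i.e. the full subcategory of $\mathcal{C}^{T(X)}$ of objects whose structure map $h_{\mathsf{M}}\colon X(M) \to M$ is a monomorphism, is a resolving subcategory of $\mathcal{C}^{T(X)}$ (generating, closed under extensions, kernels of epimorphisms, and direct summands) and is moreover closed under subobjects. -/

import Mathlib

open CategoryTheory Limits

universe v u

variable {C : Type u} [Category.{v} C]

/-- The power `X^n` of an endofunctor, with `X^(n+1) = X^n ⋙ X`. -/
def fpow (X : C ⥤ C) : ℕ → (C ⥤ C)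
  | 0 => 𝟭 C
  | n + 1 => fpow X n ⋙ X

/-- `X` is locally nilpotent if every object is annihilated by some power of `X`. -/
def LocallyNilpotent (X : C ⥤ C) : Prop :=
  ∀ M : C, ∃ n : ℕ, IsZero ((fpow X n).obj M)

/-- The category `(X ⇓ Id)` of `X`-modules, identified with the Eilenberg–Moore category
of the free monad on `X`. -/
structure XMod (X : C ⥤ C) : Type max u v where
  carrier : C
  str : X.obj carrier ⟶ carrier

/-- Morphisms of `X`-modules. -/
@[ext]
structure XModHom {X : C ⥤ C} (M N : XMod X) : Type v where
  hom : M.carrier ⟶ N.carrier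
  comm : M.str ≫ hom = X.map hom ≫ N.str

instance (X : C ⥤ C) : Category (XMod X) where
  Hom := XModHom
  id M := ⟨𝟙 M.carrier, by simp⟩
  comp f g := ⟨f.hom ≫ g.hom, by
    rw [← Category.assoc, f.comm, Category.assoc, g.comm, ← Category.assoc, ← Functor.map_comp]⟩
  id_comp f := by apply XModHom.ext; simp [CategoryStruct.id, CategoryStruct.comp]
  comp_id f := by apply XModHom.ext; simp [CategoryStruct.id, CategoryStruct.comp]
  assoc f g h := by apply XModHom.ext; simp [CategoryStruct.comp]

@[simp] lemma XMod.id_hom {X : C ⥤ C} (M : XMod X) : (𝟙 M : XModHom M M).hom = 𝟙 M.carrier := rfl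
@[simp] lemma XMod.comp_hom {X : C ⥤ C} {M N P : XMod X} (f : M ⟶ N) (g : N ⟶ P) :
    (f ≫ g).hom = f.hom ≫ g.hom := rfl

/-- `F` is the free `X`-module `f₁(N)` on `N`, encoded via the universal
property of the free–forgetful adjunction `f₁ ⊣ f⋆`. -/
structure IsFreeXModOn (X : C ⥤ C) (F : XMod X) (N : C) where
  unit : N ⟶ F.carrier
  lift : ∀ (P : XMod X), (N ⟶ P.carrier) → (F ⟶ P)
  fac : ∀ (P : XMod X) (g : N ⟶ P.carrier), unit ≫ (lift P g).hom = g
  uniq : ∀ (P : XMod X) (g : N ⟶ P.carrier) (k : F ⟶ P), unit ≫ k.hom = g → k = lift P g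

/-!
Closure under subobjects: for a mono `f : A ⟶ B` of modules, `h_A ≫ f = X f ≫ h_B` is a mono
because `X` preserves monos, so `h_A` is a mono. Summands and kernels are subobjects. For an
extension `0 → A → B → D`, left exactness makes `X f` a kernel of `X g`; an element killed by `h_B`
is killed by `X g` (as `h_D` is mono), so it comes from `X A`, where it is killed by `h_A ≫ f`,
hence vanishes.

Generation: if `X^n N = 0`, the free module on `N` is the finite biproduct
`N ⊕ X N ⊕ ⋯ ⊕ X^(n-1) N`, whose structure map is the shift, injective because truncating away
the summand `X^n N` loses nothing; the counit onto `N` is split by the inclusion of `N`.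
-/

noncomputable def kernelBiprodMapIdIso {A P Q : C} [Preadditive C] [HasBinaryBiproducts C]
    [HasKernels C] (g : P ⟶ Q) : kernel (biprod.map (𝟙 A) g) ≅ kernel g :=
  (kernelIsKernel _).conePointUniqueUpToIso <|
    KernelFork.IsLimit.ofι (kernel.ι g ≫ biprod.inr) (by simp)
      (fun k hk => kernel.lift g (k ≫ biprod.snd) (by simpa using hk =≫ biprod.snd))
      (fun k hk => by
        have hfst : k ≫ biprod.fst = 0 := by simpa using hk =≫ biprod.fst
        ext <;> simp [hfst])
      (fun k hk m hm => by
        ext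
        simpa using hm =≫ biprod.snd)

namespace XMod

variable {X : C ⥤ C}

lemma mono_str_of_mono_hom [X.PreservesMonomorphisms] {A B : XMod X} (f : A ⟶ B) [Mono f.hom]
    [Mono B.str] : Mono A.str := by
  have : Mono (A.str ≫ f.hom) := by rw [f.comm]; infer_instance
  exact mono_of_mono A.str f.hom

lemma mono_str_of_exact [Abelian C] [PreservesFiniteLimits X] {A B D : XMod X} {f : A ⟶ B}
    {g : B ⟶ D} (w : f.hom ≫ g.hom = 0) [Mono f.hom] (hfg : (ShortComplex.mk f.hom g.hom w).Exact)
    [Mono A.str] [Mono D.str] : Mono B.str := by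
  refine Preadditive.mono_of_cancel_zero _ fun k hk => ?_
  have hkg : k ≫ X.map g.hom = 0 := by
    rw [← cancel_mono D.str, Category.assoc, ← g.comm, reassoc_of% hk, zero_comp, zero_comp]
  obtain ⟨l, hl⟩ : ∃ l : _ ⟶ X.obj A.carrier, l ≫ X.map f.hom = k :=
    ⟨_, (KernelFork.IsLimit.lift' (KernelFork.mapIsLimit _ hfg.fIsKernel X) k hkg).2⟩
  have hl0 : l = 0 := by
    rw [← cancel_mono A.str, ← cancel_mono f.hom, Category.assoc, f.comm, reassoc_of% hl, hk,
      zero_comp, zero_comp]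
  rw [← hl, hl0, zero_comp]

end XMod

namespace TruncFree

open ZeroObject

variable [Preadditive C] [HasZeroObject C] [HasBinaryBiproducts C] (X : C ⥤ C) (A : C)

/-- `obj X A n = A ⊞ X A ⊞ ⋯ ⊞ X^(n-1) A`, the free `X`-module on `A` truncated in degree `n`. -/
@[reducible]
noncomputable def obj : ℕ → C
  | 0 => 0
  | n + 1 => A ⊞ X.obj (obj n)

noncomputable def incl : ∀ n : ℕ, obj X A n ⟶ obj X A (n + 1)
  | 0 => 0
  | n + 1 => biprod.map (𝟙 A) (X.map (incl n))

noncomputable def restrict : ∀ n : ℕ, obj X A (n + 1) ⟶ obj X A n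
  | 0 => 0
  | n + 1 => biprod.map (𝟙 A) (X.map (restrict n))

variable {A} in
noncomputable def desc (h : X.obj A ⟶ A) : ∀ n : ℕ, obj X A n ⟶ A
  | 0 => 0
  | n + 1 => biprod.desc (𝟙 A) (X.map (desc h n) ≫ h)

lemma incl_restrict : ∀ n : ℕ, incl X A n ≫ restrict X A n = 𝟙 _
  | 0 => (isZero_zero C).eq_of_src _ _
  | n + 1 => by
    apply biprod.hom_ext' <;> simp [incl, restrict, ← Functor.map_comp_assoc, incl_restrict n]

variable {A} in
lemma incl_desc (h : X.obj A ⟶ A) : ∀ n : ℕ, incl X A n ≫ desc X h (n + 1) = desc X h n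
  | 0 => (isZero_zero C).eq_of_src _ _
  | n + 1 => by
    change biprod.map (𝟙 A) (X.map (incl X A n)) ≫ biprod.desc (𝟙 A) (X.map (desc X h (n + 1)) ≫ h)
      = biprod.desc (𝟙 A) (X.map (desc X h n) ≫ h)
    apply biprod.hom_ext' <;> simp [← Functor.map_comp_assoc, incl_desc h n]

variable {A} in
lemma epi_desc_succ (h : X.obj A ⟶ A) (n : ℕ) : Epi (desc X h (n + 1)) :=
  epi_of_epi_fac (biprod.inl_desc (𝟙 A) (X.map (desc X h n) ≫ h))

variable [HasKernels C] [PreservesFiniteLimits X]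

noncomputable def kernelRestrictIso : ∀ n : ℕ, kernel (restrict X A n) ≅ (fpow X n).obj A
  | 0 => kernelZeroIsoSource ≪≫ (isoBiprodZero (X.map_isZero (isZero_zero C))).symm
  | n + 1 => kernelBiprodMapIdIso _ ≪≫ (PreservesKernel.iso X _).symm ≪≫
      X.mapIso (kernelRestrictIso n)

variable {X A}

lemma mono_restrict {n : ℕ} (hA : IsZero ((fpow X n).obj A)) : Mono (restrict X A n) :=
  Preadditive.mono_of_isZero_kernel _ (hA.of_iso (kernelRestrictIso X A n))

lemma restrict_incl {n : ℕ} (hA : IsZero ((fpow X n).obj A)) :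
    restrict X A n ≫ incl X A n = 𝟙 _ := by
  have := mono_restrict hA
  rw [← cancel_mono (restrict X A n), Category.assoc, incl_restrict, Category.comp_id,
    Category.id_comp]

variable (X A) in
/-- The structure map is the shift `X^i A → X^(i+1) A`, which drops the summand `X^n A`. -/
noncomputable def xMod (n : ℕ) : XMod X :=
  ⟨obj X A n, (biprod.inr : X.obj (obj X A n) ⟶ A ⊞ X.obj (obj X A n)) ≫ restrict X A n⟩

lemma mono_xMod_str {n : ℕ} (hA : IsZero ((fpow X n).obj A)) : Mono (xMod X A n).str := by
  have := mono_restrict hA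
  exact mono_comp (biprod.inr : X.obj (obj X A n) ⟶ A ⊞ X.obj (obj X A n)) (restrict X A n)

noncomputable def descHom (N : XMod X) {n : ℕ} (hN : IsZero ((fpow X n).obj N.carrier)) :
    xMod X N.carrier n ⟶ N where
  hom := desc X N.str n
  comm := by
    have : restrict X N.carrier n ≫ desc X N.str n = desc X N.str (n + 1) := by
      rw [← incl_desc, reassoc_of% restrict_incl hN]
    change (biprod.inr ≫ restrict X N.carrier n) ≫ desc X N.str n = _
    rw [Category.assoc, this]
    exact biprod.inr_desc _ _

end TruncFree

theorem XMod.exists_mono_str_epi_hom [Preadditive C] [HasZeroObject C] [HasBinaryBiproducts C]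
    [HasKernels C] {X : C ⥤ C} [PreservesFiniteLimits X] (N : XMod X)
    (hN : ∃ n, IsZero ((fpow X n).obj N.carrier)) :
    ∃ (M : XMod X) (p : M ⟶ N), Mono M.str ∧ Epi p.hom := by
  obtain ⟨n, hn⟩ := hN
  have hn' : IsZero ((fpow X (n + 1)).obj N.carrier) := X.map_isZero hn
  exact ⟨_, TruncFree.descHom N hn', TruncFree.mono_xMod_str hn', TruncFree.epi_desc_succ X N.str n⟩

theorem monoX_resolving_and_closed_under_subobjects
    [Abelian C] (X : C ⥤ C) [PreservesFiniteLimits X]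
    (hX : LocallyNilpotent X) :
    -- generating
    (∀ N : XMod X, ∃ (M : XMod X) (p : M ⟶ N), Mono M.str ∧ Epi p.hom) ∧
    -- closed under extensions
    (∀ (A B D : XMod X) (f : A ⟶ B) (g : B ⟶ D) (w : f.hom ≫ g.hom = 0),
      Mono f.hom → Epi g.hom → (ShortComplex.mk f.hom g.hom w).Exact →
      Mono A.str → Mono D.str → Mono B.str) ∧
    -- closed under kernels of epimorphisms
    (∀ (K A B : XMod X) (k : K ⟶ A) (f : A ⟶ B) (w : k.hom ≫ f.hom = 0),
      Mono k.hom → Epi f.hom → (ShortComplex.mk k.hom f.hom w).Exact →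
      Mono A.str → Mono B.str → Mono K.str) ∧
    -- closed under direct summands
    (∀ (K A : XMod X) (i : K ⟶ A) (p : A ⟶ K), i ≫ p = 𝟙 K → Mono A.str → Mono K.str) ∧
    -- closed under subobjects
    (∀ (A B : XMod X) (f : A ⟶ B), Mono f.hom → Mono B.str → Mono A.str) := by
  have sub : ∀ (A B : XMod X) (f : A ⟶ B), Mono f.hom → Mono B.str → Mono A.str :=
    fun _ _ f _ _ => XMod.mono_str_of_mono_hom f
  refine ⟨fun N => XMod.exists_mono_str_epi_hom N (hX N.carrier), ?_, ?_, ?_, sub⟩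
  · intro A B D f g w _ _ hfg _ _
    exact XMod.mono_str_of_exact w hfg
  · intro K A B k f w hk _ _ hA _
    exact sub K A k hk hA
  · intro K A i p hip hA
    have hip' : i.hom ≫ p.hom = 𝟙 K.carrier := congrArg XModHom.hom hip
    exact sub K A i (mono_of_mono_fac hip') hA
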